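/- Let a < b be real numbers, 0 < α < 1, and let f, g : [a,b] → ℝ be continuously differentiable with f(a) = f(b) = 0 or g(a) = g(b) = 0. Assume that D_{a+}^α f and D_{b-}^α g exist and are integrable on [a,b]. Then the fractional integration by parts formula holds: ∫_a^b (D_{a+}^α f)(t) g(t) dt = ∫_a^b f(t) (D_{b-}^α g)(t) dt. -/

import Mathlib

open MeasureTheory Real Set intervalIntegral Filter Topology

/-- The function whose derivative gives the left Riemann–Liouville fractional derivative
of order `α ∈ (0,1)`: `t ↦ (1/Γ(1-α)) ∫_a^t f(τ)(t-τ)^{-α} dτ`. -/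
noncomputable def leftKer (a α : ℝ) (f : ℝ → ℝ) (t : ℝ) : ℝ :=
  (1 / Real.Gamma (1 - α)) * ∫ τ in a..t, f τ * (t - τ) ^ (-α)

/-- Left Riemann–Liouville fractional derivative of order `α ∈ (0,1)`. -/
noncomputable def leftRLD (a α : ℝ) (f : ℝ → ℝ) (t : ℝ) : ℝ :=
  deriv (leftKer a α f) t

/-- The function whose (negated) derivative gives the right Riemann–Liouville fractional
derivative of order `α ∈ (0,1)`: `s ↦ (1/Γ(1-α)) ∫_s^b g(τ)(τ-s)^{-α} dτ`. -/
noncomputable def rightKer (b α : ℝ) (g : ℝ → ℝ) (s : ℝ) : ℝ :=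
  (1 / Real.Gamma (1 - α)) * ∫ τ in s..b, g τ * (τ - s) ^ (-α)

/-- Right Riemann–Liouville fractional derivative of order `α ∈ (0,1)`. -/
noncomputable def rightRLD (b α : ℝ) (g : ℝ → ℝ) (s : ℝ) : ℝ :=
  - deriv (rightKer b α g) s

namespace FracAux
variable {α : ℝ}

lemma kint (hα1 : α < 1) {c s t : ℝ} :
    ∫ x in c..s, (t - x) ^ (-α) = ((t - c) ^ (1 - α) - (t - s) ^ (1 - α)) / (1 - α) := by
  have h := intervalIntegral.integral_comp_sub_left (a := c) (b := s)
    (fun x => x ^ (-α)) t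
  rw [h, integral_rpow (Or.inl (by linarith))]
  ring_nf

lemma kii (hα1 : α < 1) (u v t : ℝ) :
    IntervalIntegrable (fun x => (t - x) ^ (-α)) volume u v := by
  have h := (intervalIntegrable_rpow' (a := t - u) (b := t - v)
    (r := -α) (by linarith)).comp_sub_left t
  simpa using h

lemma psi_ker_ii {a b : ℝ} (hα1 : α < 1) {ψ : ℝ → ℝ} (hψ : ContinuousOn ψ (Icc a b))
    {u v t : ℝ} (huv : uIcc u v ⊆ Icc a b) :
    IntervalIntegrable (fun x => ψ x * (t - x) ^ (-α)) volume u v :=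
  (kii hα1 u v t).continuousOn_mul (hψ.mono huv)

lemma norm_int_bound {a b : ℝ} (hα1 : α < 1) {ψ : ℝ → ℝ}
    (hψ : ContinuousOn ψ (Icc a b)) {M : ℝ} (hM : ∀ x ∈ Icc a b, |ψ x| ≤ M)
    {c u : ℝ} (hc : a ≤ c) (hcu : c ≤ u) (hub : u ≤ b) :
    ∫ x in Ioc c u, ‖ψ x * (u - x) ^ (-α)‖ ≤ M * ((u - c) ^ (1 - α) / (1 - α)) := by
  have hsub : uIcc c u ⊆ Icc a b := by
    rw [uIcc_of_le hcu]; exact Icc_subset_Icc hc hub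
  have h1 : IntervalIntegrable (fun x => ‖ψ x * (u - x) ^ (-α)‖) volume c u :=
    (psi_ker_ii hα1 hψ hsub).norm
  have h2 : IntervalIntegrable (fun x => M * (u - x) ^ (-α)) volume c u :=
    (kii hα1 c u u).const_mul M
  rw [← intervalIntegral.integral_of_le hcu]
  calc ∫ x in c..u, ‖ψ x * (u - x) ^ (-α)‖
      ≤ ∫ x in c..u, M * (u - x) ^ (-α) := by
        apply intervalIntegral.integral_mono_on hcu h1 h2
        intro x hx
        have hx1 : 0 ≤ u - x := by linarith [hx.2]
        rw [norm_mul, Real.norm_eq_abs, Real.norm_eq_abs,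
          abs_of_nonneg (Real.rpow_nonneg hx1 _)]
        exact mul_le_mul_of_nonneg_right (hM x ⟨le_trans hc hx.1, le_trans hx.2 hub⟩)
          (Real.rpow_nonneg hx1 _)
    _ = M * ((u - c) ^ (1 - α) / (1 - α)) := by
        rw [intervalIntegral.integral_const_mul, kint hα1, sub_self,
          Real.zero_rpow (by linarith), sub_zero]

/-- Hölder-type estimate for `t ↦ ∫_a^t ψ(x)(t-x)^{-α} dx`. -/
lemma key_est {a b : ℝ} (hα : 0 < α) (hα1 : α < 1) {ψ : ℝ → ℝ}
    (hψ : ContinuousOn ψ (Icc a b)) {M : ℝ} (hM0 : 0 ≤ M)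
    (hM : ∀ x ∈ Icc a b, |ψ x| ≤ M) {s t : ℝ}
    (hs : s ∈ Icc a b) (ht : t ∈ Icc a b) (hst : s ≤ t) :
    |(∫ x in a..t, ψ x * (t - x) ^ (-α)) - ∫ x in a..s, ψ x * (s - x) ^ (-α)|
      ≤ 2 * M / (1 - α) * (t - s) ^ (1 - α) := by
  have has : a ≤ s := hs.1
  have htb : t ≤ b := ht.2
  have hβ : (0:ℝ) < 1 - α := by linarith
  have hsub_as : uIcc a s ⊆ Icc a b := by
    rw [uIcc_of_le has]; exact Icc_subset_Icc le_rfl (le_trans hst htb)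
  have hsub_st : uIcc s t ⊆ Icc a b := by
    rw [uIcc_of_le hst]; exact Icc_subset_Icc has htb
  have i_t_as : IntervalIntegrable (fun x => ψ x * (t - x) ^ (-α)) volume a s :=
    psi_ker_ii hα1 hψ hsub_as
  have i_t_st : IntervalIntegrable (fun x => ψ x * (t - x) ^ (-α)) volume s t :=
    psi_ker_ii hα1 hψ hsub_st
  have i_s_as : IntervalIntegrable (fun x => ψ x * (s - x) ^ (-α)) volume a s :=
    psi_ker_ii hα1 hψ hsub_as
  have hsplit : (∫ x in a..t, ψ x * (t - x) ^ (-α))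
      = (∫ x in a..s, ψ x * (t - x) ^ (-α)) + ∫ x in s..t, ψ x * (t - x) ^ (-α) :=
    (intervalIntegral.integral_add_adjacent_intervals i_t_as i_t_st).symm
  rw [hsplit]
  have key : (∫ x in a..s, ψ x * (t - x) ^ (-α)) + (∫ x in s..t, ψ x * (t - x) ^ (-α))
      - ∫ x in a..s, ψ x * (s - x) ^ (-α)
      = ((∫ x in a..s, ψ x * (t - x) ^ (-α)) - ∫ x in a..s, ψ x * (s - x) ^ (-α))
        + ∫ x in s..t, ψ x * (t - x) ^ (-α) := by ring
  rw [key]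
  have hI1 : |(∫ x in a..s, ψ x * (t - x) ^ (-α)) - ∫ x in a..s, ψ x * (s - x) ^ (-α)|
      ≤ M / (1 - α) * (t - s) ^ (1 - α) := by
    rw [← intervalIntegral.integral_sub i_t_as i_s_as]
    have habs := intervalIntegral.abs_integral_le_integral_abs (μ := volume)
      (f := fun x => ψ x * (t - x) ^ (-α) - ψ x * (s - x) ^ (-α)) has
    refine le_trans habs ?_
    have i_abs : IntervalIntegrable
        (fun x => |ψ x * (t - x) ^ (-α) - ψ x * (s - x) ^ (-α)|) volume a s :=
      (i_t_as.sub i_s_as).abs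
    have i_maj : IntervalIntegrable
        (fun x => M * ((s - x) ^ (-α) - (t - x) ^ (-α))) volume a s :=
      ((kii hα1 a s s).sub (kii hα1 a s t)).const_mul M
    have hmono : (∫ x in a..s, |ψ x * (t - x) ^ (-α) - ψ x * (s - x) ^ (-α)|)
        ≤ ∫ x in a..s, M * ((s - x) ^ (-α) - (t - x) ^ (-α)) := by
      apply intervalIntegral.integral_mono_ae_restrict has i_abs i_maj
      have hne : ∀ᵐ x ∂(volume.restrict (Icc a s)), x ≠ s := by
        apply ae_restrict_of_ae
        simp [ae_iff, setOf_eq_eq_singleton]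
      filter_upwards [hne, ae_restrict_mem measurableSet_Icc] with x hxne hx
      have hxs : x < s := lt_of_le_of_ne hx.2 hxne
      have h1 : (0:ℝ) < s - x := by linarith
      have h2 : (t - x) ^ (-α) ≤ (s - x) ^ (-α) :=
        Real.rpow_le_rpow_of_nonpos h1 (by linarith) (by linarith)
      have hxab : x ∈ Icc a b := ⟨hx.1, by linarith⟩
      calc |ψ x * (t - x) ^ (-α) - ψ x * (s - x) ^ (-α)|
          = |ψ x| * |(t - x) ^ (-α) - (s - x) ^ (-α)| := by
            rw [← mul_sub, abs_mul]
        _ = |ψ x| * ((s - x) ^ (-α) - (t - x) ^ (-α)) := by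
            have h3 : |(t - x) ^ (-α) - (s - x) ^ (-α)|
                = (s - x) ^ (-α) - (t - x) ^ (-α) := by
              rw [abs_of_nonpos (by linarith)]; ring
            rw [h3]
        _ ≤ M * ((s - x) ^ (-α) - (t - x) ^ (-α)) :=
            mul_le_mul_of_nonneg_right (hM x hxab) (by linarith)
    refine le_trans hmono ?_
    rw [intervalIntegral.integral_const_mul,
      intervalIntegral.integral_sub (kii hα1 a s s) (kii hα1 a s t),
      kint hα1 (c := a) (s := s) (t := s), kint hα1 (c := a) (s := s) (t := t),
      sub_self, Real.zero_rpow (by linarith)]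
    have hmono2 : (s - a) ^ (1 - α) ≤ (t - a) ^ (1 - α) :=
      Real.rpow_le_rpow (by linarith) (by linarith) (by linarith)
    rw [div_sub_div_same, sub_zero]
    have : (s - a) ^ (1 - α) - ((t - a) ^ (1 - α) - (t - s) ^ (1 - α))
        ≤ (t - s) ^ (1 - α) := by linarith
    calc M * (((s - a) ^ (1 - α) - ((t - a) ^ (1 - α) - (t - s) ^ (1 - α))) / (1 - α))
        ≤ M * ((t - s) ^ (1 - α) / (1 - α)) := by gcongr
      _ = M / (1 - α) * (t - s) ^ (1 - α) := by ring
  have hI2 : |∫ x in s..t, ψ x * (t - x) ^ (-α)| ≤ M / (1 - α) * (t - s) ^ (1 - α) := by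
    have h := intervalIntegral.norm_integral_le_integral_norm
      (f := fun x => ψ x * (t - x) ^ (-α)) (μ := volume) hst
    rw [Real.norm_eq_abs] at h
    refine le_trans h ?_
    rw [intervalIntegral.integral_of_le hst]
    have := norm_int_bound hα1 hψ hM has hst htb
    calc (∫ x in Ioc s t, ‖ψ x * (t - x) ^ (-α)‖)
        ≤ M * ((t - s) ^ (1 - α) / (1 - α)) := norm_int_bound hα1 hψ hM has hst htb
      _ = M / (1 - α) * (t - s) ^ (1 - α) := by ring
  calc |((∫ x in a..s, ψ x * (t - x) ^ (-α)) - ∫ x in a..s, ψ x * (s - x) ^ (-α))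
        + ∫ x in s..t, ψ x * (t - x) ^ (-α)|
      ≤ |(∫ x in a..s, ψ x * (t - x) ^ (-α)) - ∫ x in a..s, ψ x * (s - x) ^ (-α)|
        + |∫ x in s..t, ψ x * (t - x) ^ (-α)| := abs_add_le _ _
    _ ≤ M / (1 - α) * (t - s) ^ (1 - α) + M / (1 - α) * (t - s) ^ (1 - α) :=
        add_le_add hI1 hI2
    _ = 2 * M / (1 - α) * (t - s) ^ (1 - α) := by ring


/-- Continuity on `[a,b]` of `t ↦ ∫_a^t ψ(x)(t-x)^{-α} dx`. -/
lemma ker_continuousOn {a b : ℝ} (hα : 0 < α) (hα1 : α < 1) {ψ : ℝ → ℝ}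
    (hψ : ContinuousOn ψ (Icc a b)) :
    ContinuousOn (fun t => ∫ x in a..t, ψ x * (t - x) ^ (-α)) (Icc a b) := by
  obtain ⟨M0, hM0⟩ := isCompact_Icc.exists_bound_of_continuousOn hψ
  set M := max M0 0 with hMdef
  have hMnn : 0 ≤ M := le_max_right _ _
  have hM : ∀ x ∈ Icc a b, |ψ x| ≤ M := fun x hx =>
    le_trans (by simpa using hM0 x hx) (le_max_left _ _)
  set W := fun t => ∫ x in a..t, ψ x * (t - x) ^ (-α) with hW
  set C := 2 * M / (1 - α) with hC
  have hbound : ∀ t ∈ Icc a b, ∀ u ∈ Icc a b, |W u - W t| ≤ C * |u - t| ^ (1 - α) := by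
    intro t ht u hu
    rcases le_total t u with h | h
    · rw [abs_of_nonneg (by linarith : (0:ℝ) ≤ u - t)]
      exact key_est hα hα1 hψ hMnn hM ht hu h
    · rw [abs_sub_comm (W u), abs_sub_comm u t,
        abs_of_nonneg (by linarith : (0:ℝ) ≤ t - u)]
      exact key_est hα hα1 hψ hMnn hM hu ht h
  intro t ht
  have htend : Tendsto (fun u : ℝ => C * |u - t| ^ (1 - α)) (𝓝[Icc a b] t) (𝓝 0) := by
    have h1 : Tendsto (fun u : ℝ => |u - t|) (𝓝 t) (𝓝 0) := by
      have hc : Continuous (fun u : ℝ => |u - t|) :=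
        continuous_abs.comp (continuous_id.sub continuous_const)
      have := hc.tendsto t
      simpa using this
    have h2 : Tendsto (fun y : ℝ => y ^ (1 - α)) (𝓝 0) (𝓝 0) := by
      have := (Real.continuousAt_rpow_const 0 (1 - α) (Or.inr (by linarith))).tendsto
      rwa [Real.zero_rpow (by linarith)] at this
    have h3 : Tendsto (fun u : ℝ => |u - t| ^ (1 - α)) (𝓝 t) (𝓝 0) := h2.comp h1
    have h4 : Tendsto (fun u : ℝ => C * |u - t| ^ (1 - α)) (𝓝 t) (𝓝 0) := by
      simpa using h3.const_mul C
    exact h4.mono_left nhdsWithin_le_nhds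
  have hdist : Tendsto (fun u => dist (W u) (W t)) (𝓝[Icc a b] t) (𝓝 0) := by
    apply squeeze_zero' (Eventually.of_forall fun u => dist_nonneg)
      _ htend
    filter_upwards [eventually_mem_nhdsWithin] with u hu
    rw [Real.dist_eq]
    exact hbound t ht u hu
  exact tendsto_iff_dist_tendsto_zero.2 hdist



/-- Triangle Fubini: swap the order of integration over `{(u,x) : c < x ≤ u ≤ d}`. -/
lemma tswap {c d : ℝ} (hcd : c ≤ d) (B : ℝ → ℝ → ℝ)
    (hmeas : AEStronglyMeasurable (fun p : ℝ × ℝ => B p.1 p.2)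
      ((volume.restrict (Ioc c d)).prod (volume.restrict (Ioc c d))))
    (hslice : ∀ u ∈ Ioc c d, IntegrableOn (B u) (Ioc c u))
    (D : ℝ → ℝ) (hD : IntegrableOn D (Ioc c d))
    (hDb : ∀ u ∈ Ioc c d, ∫ x in Ioc c u, ‖B u x‖ ≤ D u) :
    ∫ u in Ioc c d, ∫ x in Ioc c u, B u x = ∫ x in Ioc c d, ∫ u in Ioc x d, B u x := by
  set ν := volume.restrict (Ioc c d) with hν
  set S : Set (ℝ × ℝ) := {p | p.2 ≤ p.1} with hS
  have hSm : MeasurableSet S := measurableSet_le measurable_snd measurable_fst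
  set Φ : ℝ × ℝ → ℝ := S.indicator (fun p => B p.1 p.2) with hΦ
  have hΦm : AEStronglyMeasurable Φ (ν.prod ν) := hmeas.indicator hSm
  -- slices in x
  have hsliceq : ∀ u : ℝ, (fun x => Φ (u, x)) = (Iic u).indicator (B u) := by
    intro u; funext x
    simp [hΦ, Set.indicator_apply, hS, mem_Iic]
  have hset : ∀ u ∈ Ioc c d, Ioc c d ∩ Iic u = Ioc c u := by
    intro u hu; ext x
    simp only [mem_inter_iff, mem_Ioc, mem_Iic]
    exact ⟨fun h => ⟨h.1.1, h.2⟩, fun h => ⟨⟨h.1, le_trans h.2 hu.2⟩, h.2⟩⟩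
  have hsl : ∀ᵐ u ∂ν, Integrable (fun x => Φ (u, x)) ν := by
    filter_upwards [ae_restrict_mem measurableSet_Ioc] with u hu
    rw [hsliceq u, integrable_indicator_iff measurableSet_Iic]
    rw [hν, IntegrableOn, Measure.restrict_restrict measurableSet_Iic]
    rw [Set.inter_comm, hset u hu]
    exact hslice u hu
  have hinner : ∀ u ∈ Ioc c d, ∫ x, ‖Φ (u, x)‖ ∂ν = ∫ x in Ioc c u, ‖B u x‖ := by
    intro u hu
    have heq : (fun x => ‖Φ (u, x)‖) = (Iic u).indicator (fun x => ‖B u x‖) := by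
      funext x
      rw [congrFun (hsliceq u) x, norm_indicator_eq_indicator_norm]
    rw [heq, hν, setIntegral_indicator measurableSet_Iic, hset u hu]
  have hbd : Integrable (fun u => ∫ x, ‖Φ (u, x)‖ ∂ν) ν := by
    apply Integrable.mono' hD hΦm.norm.integral_prod_right'
    filter_upwards [ae_restrict_mem measurableSet_Ioc] with u hu
    rw [Real.norm_eq_abs, abs_of_nonneg (integral_nonneg (fun x => norm_nonneg _)),
      hinner u hu]
    exact hDb u hu
  have hint : Integrable Φ (ν.prod ν) := (integrable_prod_iff hΦm).2 ⟨hsl, hbd⟩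
  have hswap := MeasureTheory.integral_integral_swap (μ := ν) (ν := ν)
    (f := fun u x => Φ (u, x)) hint
  calc ∫ u in Ioc c d, ∫ x in Ioc c u, B u x
      = ∫ u, (∫ x, Φ (u, x) ∂ν) ∂ν := by
        apply setIntegral_congr_fun measurableSet_Ioc
        intro u hu
        dsimp only
        rw [hsliceq u, hν, setIntegral_indicator measurableSet_Iic, hset u hu]
    _ = ∫ x, (∫ u, Φ (u, x) ∂ν) ∂ν := hswap
    _ = ∫ x in Ioc c d, ∫ u in Ioc x d, B u x := by
        apply setIntegral_congr_fun measurableSet_Ioc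
        intro x hx
        have h1 : (fun u => Φ (u, x)) = (Ici x).indicator (fun u => B u x) := by
          funext u; simp [hΦ, Set.indicator_apply, hS, mem_Ici]
        have h2 : Ioc c d ∩ Ici x = Icc x d := by
          ext u
          simp only [mem_inter_iff, mem_Ioc, mem_Ici, mem_Icc]
          exact ⟨fun h => ⟨h.2, h.1.2⟩, fun h => ⟨⟨lt_of_lt_of_le hx.1 h.1, h.2⟩, h.1⟩⟩
        dsimp only
        rw [h1, hν, setIntegral_indicator measurableSet_Ici, h2,
          integral_Icc_eq_integral_Ioc]



lemma kint2 (hα1 : α < 1) {s t : ℝ} :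
    ∫ x in s..t, (x - s) ^ (-α) = (t - s) ^ (1 - α) / (1 - α) := by
  have h := intervalIntegral.integral_comp_sub_right (a := s) (b := t)
    (fun x => x ^ (-α)) s
  rw [h, integral_rpow (Or.inl (by linarith)), sub_self,
    Real.zero_rpow (by linarith)]
  ring_nf

lemma kii2 (hα1 : α < 1) (u v s : ℝ) :
    IntervalIntegrable (fun x => (x - s) ^ (-α)) volume u v := by
  have h := (intervalIntegrable_rpow' (a := u - s) (b := v - s)
    (r := -α) (by linarith)).comp_sub_right s
  simpa using h

lemma psi_ker_ii2 {a b : ℝ} (hα1 : α < 1) {ψ : ℝ → ℝ} (hψ : ContinuousOn ψ (Icc a b))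
    {u v s : ℝ} (huv : uIcc u v ⊆ Icc a b) :
    IntervalIntegrable (fun x => ψ x * (x - s) ^ (-α)) volume u v :=
  (kii2 hα1 u v s).continuousOn_mul (hψ.mono huv)

/-- Measurability helper for the double integrals. -/
lemma aesm_helper {a b c d : ℝ} (hsub : Ioc c d ⊆ Icc a b) {ψ χ : ℝ → ℝ}
    (hψ : ContinuousOn ψ (Icc a b)) (hχ : ContinuousOn χ (Icc a b))
    {F : ℝ × ℝ → ℝ} (hF : Measurable F) :
    AEStronglyMeasurable (fun p : ℝ × ℝ => χ p.1 * ψ p.2 * F p)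
      ((volume.restrict (Ioc c d)).prod (volume.restrict (Ioc c d))) := by
  rw [Measure.prod_restrict]
  have h1 : ContinuousOn (fun p : ℝ × ℝ => χ p.1 * ψ p.2) (Icc a b ×ˢ Icc a b) :=
    (hχ.comp continuous_fst.continuousOn (fun p hp => hp.1)).mul
      (hψ.comp continuous_snd.continuousOn (fun p hp => hp.2))
  have h2 : AEStronglyMeasurable (fun p : ℝ × ℝ => χ p.1 * ψ p.2)
      ((volume.prod volume).restrict (Icc a b ×ˢ Icc a b)) :=
    h1.aestronglyMeasurable (measurableSet_Icc.prod measurableSet_Icc)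
  have h3 : ((volume.prod volume).restrict (Ioc c d ×ˢ Ioc c d) : Measure (ℝ × ℝ))
      ≤ (volume.prod volume).restrict (Icc a b ×ˢ Icc a b) :=
    Measure.restrict_mono (prod_mono hsub hsub) le_rfl
  exact (h2.mono_measure h3).mul hF.aestronglyMeasurable

/-- First triangle-swap instance: kernel `(u-y)^{-α}` with bounded factors. -/
lemma ts1 {a b : ℝ} (hα : 0 < α) (hα1 : α < 1) {c d : ℝ} (hac : a ≤ c) (hcd : c ≤ d)
    (hdb : d ≤ b) {ψ χ : ℝ → ℝ} (hψ : ContinuousOn ψ (Icc a b))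
    (hχ : ContinuousOn χ (Icc a b)) :
    ∫ u in Ioc c d, ∫ y in Ioc c u, χ u * ψ y * (u - y) ^ (-α)
      = ∫ y in Ioc c d, ∫ u in Ioc y d, χ u * ψ y * (u - y) ^ (-α) := by
  have hβ : (0:ℝ) < 1 - α := by linarith
  obtain ⟨Mψ, hMψ⟩ := isCompact_Icc.exists_bound_of_continuousOn hψ
  obtain ⟨Mχ, hMχ⟩ := isCompact_Icc.exists_bound_of_continuousOn hχ
  set Mψ' := max Mψ 0 with hMψ'
  set Mχ' := max Mχ 0 with hMχ'
  have hMψn : ∀ x ∈ Icc a b, |ψ x| ≤ Mψ' := fun x hx =>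
    le_trans (by simpa using hMψ x hx) (le_max_left _ _)
  have hMχn : ∀ x ∈ Icc a b, |χ x| ≤ Mχ' := fun x hx =>
    le_trans (by simpa using hMχ x hx) (le_max_left _ _)
  have hsub : Ioc c d ⊆ Icc a b := fun x hx => ⟨le_trans hac hx.1.le, le_trans hx.2 hdb⟩
  refine tswap hcd _ (aesm_helper hsub hψ hχ (by fun_prop))
    (fun u hu => ?_) (fun _ => Mχ' * (Mψ' * ((b - a) ^ (1 - α) / (1 - α))))
    (integrableOn_const measure_Ioc_lt_top.ne) (fun u hu => ?_)
  · have huab : u ∈ Icc a b := hsub hu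
    have hsubu : uIcc c u ⊆ Icc a b := by
      rw [uIcc_of_le hu.1.le]; exact Icc_subset_Icc hac huab.2
    have h1 : IntervalIntegrable (fun y => χ u * (ψ y * (u - y) ^ (-α))) volume c u :=
      (psi_ker_ii hα1 hψ hsubu).const_mul (χ u)
    have h2 : IntervalIntegrable (fun y => χ u * ψ y * (u - y) ^ (-α)) volume c u := by
      simpa [mul_assoc] using h1
    exact h2.1
  · have huab : u ∈ Icc a b := hsub hu
    have heq : ∀ y : ℝ, ‖χ u * ψ y * (u - y) ^ (-α)‖
        = |χ u| * ‖ψ y * (u - y) ^ (-α)‖ := by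
      intro y
      rw [mul_assoc, norm_mul, Real.norm_eq_abs]
    have hnn : 0 ≤ ∫ y in Ioc c u, ‖ψ y * (u - y) ^ (-α)‖ :=
      integral_nonneg fun y => norm_nonneg _
    have hMψ'nn : (0:ℝ) ≤ Mψ' := le_max_right _ _
    calc ∫ y in Ioc c u, ‖χ u * ψ y * (u - y) ^ (-α)‖
        = |χ u| * ∫ y in Ioc c u, ‖ψ y * (u - y) ^ (-α)‖ := by
          simp_rw [heq]; exact MeasureTheory.integral_const_mul _ _
      _ ≤ Mχ' * (Mψ' * ((b - a) ^ (1 - α) / (1 - α))) := by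
          apply mul_le_mul (hMχn u huab) _ hnn (le_trans (abs_nonneg _) (hMχn u huab))
          refine le_trans (norm_int_bound hα1 hψ hMψn hac hu.1.le huab.2) ?_
          have h2 : (u - c) ^ (1 - α) ≤ (b - a) ^ (1 - α) :=
            Real.rpow_le_rpow (by linarith [hu.1.le]) (by linarith [huab.2]) (by linarith)
          gcongr


/-- Second triangle-swap instance: kernel `(t-x)^{-α}` depending on the outer variable. -/
lemma ts2 {a b : ℝ} (hα : 0 < α) (hα1 : α < 1) {t : ℝ} (hat : a ≤ t) (htb : t ≤ b)
    {ψ : ℝ → ℝ} (hψ : ContinuousOn ψ (Icc a b)) :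
    ∫ x in Ioc a t, ∫ y in Ioc a x, ψ y * (t - x) ^ (-α)
      = ∫ y in Ioc a t, ∫ x in Ioc y t, ψ y * (t - x) ^ (-α) := by
  have hβ : (0:ℝ) < 1 - α := by linarith
  obtain ⟨Mψ, hMψ⟩ := isCompact_Icc.exists_bound_of_continuousOn hψ
  set Mψ' := max Mψ 0 with hMψ'
  have hMψ'nn : (0:ℝ) ≤ Mψ' := le_max_right _ _
  have hMψn : ∀ x ∈ Icc a b, ‖ψ x‖ ≤ Mψ' := fun x hx =>
    le_trans (hMψ x hx) (le_max_left _ _)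
  have hsub : Ioc a t ⊆ Icc a b := fun x hx => ⟨hx.1.le, le_trans hx.2 htb⟩
  have hmeas : AEStronglyMeasurable (fun p : ℝ × ℝ => ψ p.2 * (t - p.1) ^ (-α))
      ((volume.restrict (Ioc a t)).prod (volume.restrict (Ioc a t))) := by
    have h := aesm_helper (a := a) (b := b) (c := a) (d := t) hsub hψ
      (continuousOn_const (c := (1:ℝ)))
      (F := fun p : ℝ × ℝ => (t - p.1) ^ (-α)) (by fun_prop)
    exact h.congr (Eventually.of_forall fun p => by simp)
  refine tswap hat _ hmeas (fun x hx => ?_)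
    (fun x => Mψ' * (b - a) * (t - x) ^ (-α))
    (((kii hα1 a t t).const_mul (Mψ' * (b - a))).1) (fun x hx => ?_)
  · have hxab : x ∈ Icc a b := hsub hx
    have hsubx : uIcc a x ⊆ Icc a b := by
      rw [uIcc_of_le hx.1.le]; exact Icc_subset_Icc le_rfl hxab.2
    exact (((hψ.mono hsubx).mul continuousOn_const).intervalIntegrable).1
  · have hxab : x ∈ Icc a b := hsub hx
    have hK : (0:ℝ) ≤ (t - x) ^ (-α) := Real.rpow_nonneg (by linarith [hx.2]) _
    have heq : ∀ y : ℝ, ‖ψ y * (t - x) ^ (-α)‖ = ‖ψ y‖ * (t - x) ^ (-α) := by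
      intro y; rw [norm_mul, Real.norm_eq_abs ((t - x) ^ (-α)), abs_of_nonneg hK]
    have hsubx : uIcc a x ⊆ Icc a b := by
      rw [uIcc_of_le hx.1.le]; exact Icc_subset_Icc le_rfl hxab.2
    have hiabs : IntegrableOn (fun y => ‖ψ y‖) (Ioc a x) volume :=
      ((hψ.mono hsubx).intervalIntegrable).norm.1
    have hinner : ∫ y in Ioc a x, ‖ψ y‖ ≤ Mψ' * (b - a) := by
      calc ∫ y in Ioc a x, ‖ψ y‖
          ≤ ∫ _y in Ioc a x, Mψ' := by
            apply setIntegral_mono_on hiabs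
              (integrableOn_const measure_Ioc_lt_top.ne) measurableSet_Ioc
            intro y hy
            exact hMψn y ⟨hy.1.le, le_trans hy.2 hxab.2⟩
        _ = (x - a) * Mψ' := by
            rw [setIntegral_const, smul_eq_mul, measureReal_def, Real.volume_Ioc,
              ENNReal.toReal_ofReal (by linarith [hx.1.le])]
        _ ≤ Mψ' * (b - a) := by nlinarith [hxab.2, hxab.1, hx.1.le]
    calc ∫ y in Ioc a x, ‖ψ y * (t - x) ^ (-α)‖
        = (∫ y in Ioc a x, ‖ψ y‖) * (t - x) ^ (-α) := by
          simp_rw [heq]; exact MeasureTheory.integral_mul_const _ _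
      _ ≤ Mψ' * (b - a) * (t - x) ^ (-α) := mul_le_mul_of_nonneg_right hinner hK


/-- FTC for `C¹` functions on `[a,b]`, up to an interior point. -/
lemma ftc_sub {a b : ℝ} (hab : a < b) {f : ℝ → ℝ} (hf : ContDiffOn ℝ 1 f (Icc a b))
    {τ : ℝ} (hτ : τ ∈ Icc a b) :
    ∫ x in a..τ, derivWithin f (Icc a b) x = f τ - f a := by
  have hφc : ContinuousOn (derivWithin f (Icc a b)) (Icc a b) :=
    hf.continuousOn_derivWithin (uniqueDiffOn_Icc hab) le_rfl
  have hsub : Icc a τ ⊆ Icc a b := Icc_subset_Icc le_rfl hτ.2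
  have hsub' : uIcc a τ ⊆ Icc a b := by rw [uIcc_of_le hτ.1]; exact hsub
  apply intervalIntegral.integral_eq_sub_of_hasDeriv_right_of_le hτ.1
    (hf.continuousOn.mono hsub) _ ((hφc.mono hsub').intervalIntegrable)
  intro x hx
  have hx' : x ∈ Icc a b := ⟨hx.1.le, le_trans hx.2.le hτ.2⟩
  have hd : HasDerivWithinAt f (derivWithin f (Icc a b) x) (Icc a b) x :=
    (hf.differentiableOn one_ne_zero x hx').hasDerivWithinAt
  apply hd.mono_of_mem_nhdsWithin
  apply Filter.mem_of_superset
    (Ioc_mem_nhdsGT_of_mem ⟨le_rfl, lt_of_lt_of_le hx.2 hτ.2⟩)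
  exact fun y hy => ⟨le_trans hx'.1 hy.1.le, hy.2⟩

/-- `f` has derivative `derivWithin f (Icc a b)` at interior points. -/
lemma hasDerivAt_interior {a b : ℝ} {f : ℝ → ℝ} (hf : ContDiffOn ℝ 1 f (Icc a b))
    {x : ℝ} (hx : x ∈ Ioo a b) :
    HasDerivAt f (derivWithin f (Icc a b) x) x := by
  have hd : HasDerivWithinAt f (derivWithin f (Icc a b) x) (Icc a b) x :=
    (hf.differentiableOn one_ne_zero x (Ioo_subset_Icc_self hx)).hasDerivWithinAt
  exact hd.hasDerivAt (Icc_mem_nhds hx.1 hx.2)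

/-- Reflection identity for the right kernel. -/
lemma rightKer_eq (a b α : ℝ) (g : ℝ → ℝ) (s : ℝ) :
    rightKer b α g s = leftKer a α (fun x => g (a + b - x)) (a + b - s) := by
  unfold rightKer leftKer
  congr 1
  have h := intervalIntegral.integral_comp_sub_left (a := a) (b := a + b - s)
    (fun y => g y * (y - s) ^ (-α)) (a + b)
  have he1 : a + b - (a + b - s) = s := by ring
  have he2 : a + b - a = b := by ring
  rw [he1, he2] at h
  rw [← h]
  apply intervalIntegral.integral_congr
  intro x _
  have : a + b - x - s = a + b - s - x := by ring
  simp only [this]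

/-- Reflection identity for the right RL derivative. -/
lemma rightRLD_eq (a b α : ℝ) (g : ℝ → ℝ) (s : ℝ) :
    rightRLD b α g s = leftRLD a α (fun x => g (a + b - x)) (a + b - s) := by
  unfold rightRLD leftRLD
  have hk : rightKer b α g = fun u => leftKer a α (fun x => g (a + b - x)) (a + b - u) :=
    funext (rightKer_eq a b α g)
  rw [hk, deriv_comp_const_sub, neg_neg]


/-- Main lemma: integration by parts when `f` vanishes at the endpoints. -/
lemma main_case1 (a b α : ℝ) (hab : a < b) (hα : 0 < α) (hα1 : α < 1)
    (f g : ℝ → ℝ) (hf : ContDiffOn ℝ 1 f (Icc a b)) (hg : ContDiffOn ℝ 1 g (Icc a b))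
    (hfa : f a = 0) (hfb : f b = 0)
    (hexg : ∀ s ∈ Ioo a b, DifferentiableAt ℝ (rightKer b α g) s)
    (hig : IntervalIntegrable (rightRLD b α g) volume a b) :
    ∫ s in a..b, leftRLD a α f s * g s = ∫ s in a..b, f s * rightRLD b α g s := by
  have hβ : (0:ℝ) < 1 - α := by linarith
  set c0 := 1 / Real.Gamma (1 - α) with hc0
  set φ := derivWithin f (Icc a b) with hφdef
  have hφc : ContinuousOn φ (Icc a b) := by
    rw [hφdef]; exact hf.continuousOn_derivWithin (uniqueDiffOn_Icc hab) le_rfl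
  have hfc : ContinuousOn f (Icc a b) := hf.continuousOn
  have hgc : ContinuousOn g (Icc a b) := hg.continuousOn
  set W := fun t => ∫ x in a..t, φ x * (t - x) ^ (-α) with hWdef
  set H := fun t => c0 * W t with hHdef
  set G := rightKer b α g with hGdef
  -- Step A: the kernel identity `leftKer a α f t = ∫_a^t H`.
  have hkerid : ∀ t ∈ Icc a b, leftKer a α f t = ∫ u in a..t, H u := by
    intro t ht
    have hA : ∫ x in a..t, f x * (t - x) ^ (-α)
        = ∫ y in Ioc a t, φ y * ((t - y) ^ (1 - α) / (1 - α)) := by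
      rw [intervalIntegral.integral_of_le ht.1]
      have h1 : ∀ x ∈ Ioc a t, f x * (t - x) ^ (-α)
          = ∫ y in Ioc a x, φ y * (t - x) ^ (-α) := by
        intro x hx
        have hx' : x ∈ Icc a b := ⟨hx.1.le, le_trans hx.2 ht.2⟩
        rw [MeasureTheory.integral_mul_const, ← intervalIntegral.integral_of_le hx.1.le]
        rw [show ∫ y in a..x, φ y = f x - f a from by
          rw [hφdef]; exact ftc_sub hab hf hx']
        rw [hfa, sub_zero]
      rw [setIntegral_congr_fun measurableSet_Ioc h1, ts2 hα hα1 ht.1 ht.2 hφc]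
      apply setIntegral_congr_fun measurableSet_Ioc
      intro y hy
      dsimp only
      rw [MeasureTheory.integral_const_mul, ← intervalIntegral.integral_of_le hy.2, kint hα1,
        sub_self, Real.zero_rpow (by linarith), sub_zero]
    have hB : ∫ u in a..t, W u = ∫ y in Ioc a t, φ y * ((t - y) ^ (1 - α) / (1 - α)) := by
      rw [intervalIntegral.integral_of_le ht.1]
      have h1 : ∀ u ∈ Ioc a t, W u = ∫ y in Ioc a u, φ y * (u - y) ^ (-α) := by
        intro u hu
        rw [hWdef]
        exact intervalIntegral.integral_of_le hu.1.le
      rw [setIntegral_congr_fun measurableSet_Ioc h1]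
      have hts := ts1 hα hα1 le_rfl ht.1 ht.2 hφc (continuousOn_const (c := (1:ℝ)))
      simp only [one_mul] at hts
      rw [hts]
      apply setIntegral_congr_fun measurableSet_Ioc
      intro y hy
      dsimp only
      rw [MeasureTheory.integral_const_mul, ← intervalIntegral.integral_of_le hy.2, kint2 hα1]
    show leftKer a α f t = ∫ u in a..t, H u
    unfold leftKer
    rw [← hc0, hA]
    simp only [hHdef]
    rw [intervalIntegral.integral_const_mul, hB]
  -- Step B: continuity of `H` on `[a,b]`.
  have hWc : ContinuousOn W (Icc a b) := by
    rw [hWdef]; exact ker_continuousOn hα hα1 hφc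
  have hHc : ContinuousOn H (Icc a b) := by
    rw [hHdef]; exact continuousOn_const.mul hWc
  -- Step C: `leftKer a α f` has derivative `H t` on the interior.
  have hderivK : ∀ t ∈ Ioo a b, HasDerivAt (leftKer a α f) (H t) t := by
    intro t ht
    have h1 : IntervalIntegrable H volume a t := by
      apply (hHc.mono _).intervalIntegrable
      rw [uIcc_of_le ht.1.le]
      exact Icc_subset_Icc le_rfl ht.2.le
    have hsm : StronglyMeasurableAtFilter H (𝓝 t) volume :=
      (ContinuousOn.stronglyMeasurableAtFilter isOpen_Ioo
        (hHc.mono Ioo_subset_Icc_self)) t ht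
    have hca : ContinuousAt H t :=
      (hHc t (Ioo_subset_Icc_self ht)).continuousAt (Icc_mem_nhds ht.1 ht.2)
    have h0 : HasDerivAt (fun u => ∫ x in a..u, H x) (H t) t :=
      intervalIntegral.integral_hasDerivAt_right h1 hsm hca
    apply h0.congr_of_eventuallyEq
    filter_upwards [Icc_mem_nhds ht.1 ht.2] with u hu
    exact hkerid u hu
  -- Step D: replace `leftRLD` by `H` in the integral.
  have hLrw : ∫ s in a..b, leftRLD a α f s * g s = ∫ s in a..b, H s * g s := by
    apply intervalIntegral.integral_congr_ae
    have hbne : ∀ᵐ x : ℝ ∂volume, x ≠ b := by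
      simp [ae_iff, setOf_eq_eq_singleton]
    filter_upwards [hbne] with s hsne hmem
    rw [uIoc_of_le hab.le] at hmem
    have hs : s ∈ Ioo a b := ⟨hmem.1, lt_of_le_of_ne hmem.2 hsne⟩
    have : leftRLD a α f s = H s := (hderivK s hs).deriv
    rw [this]
  -- Step E: Fubini swap.
  have hswap : ∫ s in a..b, H s * g s = ∫ y in a..b, φ y * G y := by
    rw [intervalIntegral.integral_of_le hab.le, intervalIntegral.integral_of_le hab.le]
    have h1 : ∀ s ∈ Ioc a b, H s * g s
        = c0 * ∫ y in Ioc a s, g s * φ y * (s - y) ^ (-α) := by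
      intro s hs
      have h2 : ∫ y in Ioc a s, g s * φ y * (s - y) ^ (-α)
          = g s * ∫ y in Ioc a s, φ y * (s - y) ^ (-α) := by
        rw [← MeasureTheory.integral_const_mul]
        apply setIntegral_congr_fun measurableSet_Ioc
        intro y _
        ring
      have h3 : W s = ∫ y in Ioc a s, φ y * (s - y) ^ (-α) := by
        rw [hWdef]
        exact intervalIntegral.integral_of_le hs.1.le
      simp only [hHdef]
      rw [h2, ← h3]
      ring
    rw [setIntegral_congr_fun measurableSet_Ioc h1, MeasureTheory.integral_const_mul,
      ts1 hα hα1 le_rfl hab.le le_rfl hφc hgc, ← MeasureTheory.integral_const_mul]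
    apply setIntegral_congr_fun measurableSet_Ioc
    intro y hy
    dsimp only
    have h4 : ∫ u in Ioc y b, g u * φ y * (u - y) ^ (-α)
        = φ y * ∫ u in Ioc y b, g u * (u - y) ^ (-α) := by
      rw [← MeasureTheory.integral_const_mul]
      apply setIntegral_congr_fun measurableSet_Ioc
      intro u _
      ring
    rw [h4, hGdef]
    unfold rightKer
    rw [← hc0, intervalIntegral.integral_of_le hy.2]
    ring
  -- Step F: continuity of `G` on `[a,b]`.
  have hmaps : MapsTo (fun x => a + b - x) (Icc a b) (Icc a b) := by
    intro x hx
    simp only [mem_Icc] at hx ⊢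
    constructor <;> linarith [hx.1, hx.2]
  have hgtc : ContinuousOn (fun x => g (a + b - x)) (Icc a b) :=
    hgc.comp (continuous_const.sub continuous_id).continuousOn hmaps
  have hGc : ContinuousOn G (Icc a b) := by
    have h1 : ContinuousOn (leftKer a α (fun x => g (a + b - x))) (Icc a b) := by
      unfold leftKer
      exact continuousOn_const.mul (ker_continuousOn hα hα1 hgtc)
    have h2 : G = fun s => leftKer a α (fun x => g (a + b - x)) (a + b - s) := by
      rw [hGdef]
      exact funext (rightKer_eq a b α g)
    rw [h2]
    exact h1.comp (continuous_const.sub continuous_id).continuousOn hmaps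
  -- Step G: product FTC.
  set P := fun s => f s * G s with hPdef
  have hPc : ContinuousOn P (Icc a b) := hfc.mul hGc
  have hPd : ∀ s ∈ Ioo a b, HasDerivAt P (φ s * G s + f s * deriv G s) s := by
    intro s hs
    have h1 : HasDerivAt f (φ s) s := by
      rw [hφdef]; exact hasDerivAt_interior hf hs
    exact h1.mul (hexg s hs).hasDerivAt
  have hint1 : IntervalIntegrable (fun s => φ s * G s) volume a b :=
    (hφc.mul hGc).intervalIntegrable_of_Icc hab.le
  have hint2 : IntervalIntegrable (fun s => f s * deriv G s) volume a b := by
    have h1 : IntervalIntegrable (fun s => f s * rightRLD b α g s) volume a b :=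
      hig.continuousOn_mul (by rw [uIcc_of_le hab.le]; exact hfc)
    have h2 : (fun s => f s * deriv G s) = fun s => -(f s * rightRLD b α g s) := by
      funext s
      unfold rightRLD
      rw [hGdef]
      ring
    rw [h2]
    exact h1.neg
  have hftc : ∫ s in a..b, (φ s * G s + f s * deriv G s) = P b - P a :=
    intervalIntegral.integral_eq_sub_of_hasDerivAt_of_le hab.le hPc hPd
      (hint1.add hint2)
  have hzero : P b - P a = 0 := by
    simp only [hPdef, hfa, hfb, zero_mul, sub_zero]
  rw [intervalIntegral.integral_add hint1 hint2, hzero] at hftc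
  have hRrw : ∫ s in a..b, f s * rightRLD b α g s
      = - ∫ s in a..b, f s * deriv G s := by
    rw [← intervalIntegral.integral_neg]
    apply intervalIntegral.integral_congr
    intro s _
    unfold rightRLD
    rw [hGdef]
    ring
  rw [hLrw, hswap, hRrw]
  linarith

end FracAux


/-- Fractional integration by parts:
`∫_a^b (D_{a+}^α f)(t) g(t) dt = ∫_a^b f(t) (D_{b-}^α g)(t) dt`. -/
theorem fractional_integration_by_parts (a b α : ℝ) (hab : a < b)
    (hα : 0 < α) (hα1 : α < 1)
    (f g : ℝ → ℝ)
    (hf : ContDiffOn ℝ 1 f (Icc a b)) (hg : ContDiffOn ℝ 1 g (Icc a b))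
    (hbd : (f a = 0 ∧ f b = 0) ∨ (g a = 0 ∧ g b = 0))
    (hexf : ∀ s ∈ Ioo a b, DifferentiableAt ℝ (leftKer a α f) s)
    (hexg : ∀ s ∈ Ioo a b, DifferentiableAt ℝ (rightKer b α g) s)
    (hif : IntervalIntegrable (leftRLD a α f) volume a b)
    (hig : IntervalIntegrable (rightRLD b α g) volume a b) :
    ∫ s in a..b, leftRLD a α f s * g s = ∫ s in a..b, f s * rightRLD b α g s := by
  rcases hbd with ⟨hfa, hfb⟩ | ⟨hga, hgb⟩
  · exact FracAux.main_case1 a b α hab hα hα1 f g hf hg hfa hfb hexg hig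
  · -- reflection to reduce to the first case
    have e1 : a + b - a = b := by ring
    have e2 : a + b - b = a := by ring
    have hmaps : MapsTo (fun x : ℝ => a + b - x) (Icc a b) (Icc a b) := by
      intro x hx
      simp only [mem_Icc] at hx ⊢
      constructor <;> linarith [hx.1, hx.2]
    have hcd : ContDiff ℝ 1 (fun x : ℝ => a + b - x) := contDiff_const.sub contDiff_id
    have hg2 : ContDiffOn ℝ 1 (fun x => g (a + b - x)) (Icc a b) :=
      hg.comp hcd.contDiffOn hmaps
    have hf2 : ContDiffOn ℝ 1 (fun x => f (a + b - x)) (Icc a b) :=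
      hf.comp hcd.contDiffOn hmaps
    have hrKf : rightKer b α (fun x => f (a + b - x))
        = fun s => leftKer a α f (a + b - s) := by
      funext s
      rw [FracAux.rightKer_eq a b α _ s]
      congr 1
      funext x
      congr 1
      ring
    have hrRf : rightRLD b α (fun x => f (a + b - x))
        = fun s => leftRLD a α f (a + b - s) := by
      funext s
      rw [FracAux.rightRLD_eq a b α _ s]
      unfold leftRLD
      congr 2
      funext x
      congr 1
      ring
    have hexg' : ∀ s ∈ Ioo a b,
        DifferentiableAt ℝ (rightKer b α (fun x => f (a + b - x))) s := by
      intro s hs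
      rw [hrKf]
      have h1 : a + b - s ∈ Ioo a b := ⟨by linarith [hs.2], by linarith [hs.1]⟩
      exact (hexf _ h1).comp s
        (((differentiable_const (a + b)).sub differentiable_id).differentiableAt)
    have hig' : IntervalIntegrable (rightRLD b α (fun x => f (a + b - x))) volume a b := by
      rw [hrRf]
      have h := hif.comp_sub_left (a + b)
      rw [e1, e2] at h
      exact h.symm
    have hga' : (fun x => g (a + b - x)) a = 0 := by
      show g (a + b - a) = 0
      rw [e1]; exact hgb
    have hgb' : (fun x => g (a + b - x)) b = 0 := by
      show g (a + b - b) = 0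
      rw [e2]; exact hga
    have hmain := FracAux.main_case1 a b α hab hα hα1
      (fun x => g (a + b - x)) (fun x => f (a + b - x))
      hg2 hf2 hga' hgb' hexg' hig'
    have hlg : leftRLD a α (fun x => g (a + b - x))
        = fun s => rightRLD b α g (a + b - s) := by
      funext s
      have h := FracAux.rightRLD_eq a b α g (a + b - s)
      rw [show a + b - (a + b - s) = s from by ring] at h
      exact h.symm
    simp only [hlg, hrRf] at hmain
    -- hmain : ∫ s in a..b, rightRLD b α g (a+b-s) * f (a+b-s)
    --        = ∫ s in a..b, g (a+b-s) * leftRLD a α f (a+b-s)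
    have hLrefl := intervalIntegral.integral_comp_sub_left (a := a) (b := b)
      (fun x => rightRLD b α g x * f x) (a + b)
    have hRrefl := intervalIntegral.integral_comp_sub_left (a := a) (b := b)
      (fun x => g x * leftRLD a α f x) (a + b)
    rw [e1, e2] at hLrefl hRrefl
    rw [hLrefl, hRrefl] at hmain
    -- hmain : ∫ x in a..b, rightRLD b α g x * f x = ∫ x in a..b, g x * leftRLD a α f x
    calc ∫ s in a..b, leftRLD a α f s * g s
        = ∫ s in a..b, g s * leftRLD a α f s := by
          apply intervalIntegral.integral_congr
          intro s _
          ring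
      _ = ∫ s in a..b, rightRLD b α g s * f s := hmain.symm
      _ = ∫ s in a..b, f s * rightRLD b α g s := by
          apply intervalIntegral.integral_congr
          intro s _
          ring
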